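/- arXiv:2105.10253 — 5 statements merged into one kernel-verified Lean document; each statement's English description precedes it below -/
import Mathlib

section
/- For any L2 > −1, the elastic energy density f_el(q1,q2,q3) satisfies the pointwise lower bound f_el ≥ min{1, 1+L2}·(|∇q1|² + |∇q2|² + 3|∇q3|²), for all C¹ functions q1, q2, q3. -/
/-- Pointwise coercivity lower bound for the anisotropic elastic energy density,
valid for all `L2 > −1`; the variables denote first partial derivatives. -/
theorem elastic_energy_lower_bound
    (L2 q1x q1y q2x q2y q3x q3y : ℝ) (hL2 : -1 < L2) :
    (1 + L2 / 2) * (q1x ^ 2 + q1y ^ 2) + (1 + L2 / 2) * (q2x ^ 2 + q2y ^ 2)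
      + (3 + L2 / 2) * (q3x ^ 2 + q3y ^ 2)
      + L2 * (q1y * q3y - q1x * q3x - q2y * q3x - q2x * q3y)
      + |L2| * (q2y * q1x - q1y * q2x)
    ≥ min 1 (1 + L2) * ((q1x ^ 2 + q1y ^ 2) + (q2x ^ 2 + q2y ^ 2)
        + 3 * (q3x ^ 2 + q3y ^ 2)) := by
  rcases le_or_gt 0 L2 with h | h
  · rw [abs_of_nonneg h, min_eq_left (by linarith)]
    nlinarith [sq_nonneg (q1y + q3y), sq_nonneg (q1x - q3x), sq_nonneg (q2y - q3x),
      sq_nonneg (q2x - q3y), sq_nonneg (q2y + q1x), sq_nonneg (q1y - q2x),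
      mul_nonneg h (sq_nonneg (q1y + q3y - q2x)), mul_nonneg h (sq_nonneg (q1x - q3x + q2y)),
      mul_nonneg h (sq_nonneg (q2x - q3y)), mul_nonneg h (sq_nonneg (q2y - q3x)),
      mul_nonneg h (sq_nonneg q3x), mul_nonneg h (sq_nonneg q3y)]
  · rw [abs_of_neg h, min_eq_right (by linarith)]
    have h' : 0 ≤ -L2 := by linarith
    nlinarith [mul_nonneg h' (sq_nonneg (q1x + q2y + q3x)),
      mul_nonneg h' (sq_nonneg (q2x + q3y - q1y)),
      mul_nonneg h' (sq_nonneg q3x), mul_nonneg h' (sq_nonneg q3y)]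
end

section
/- With A < 0, B, C > 0 and s₊ = (B + √(B² + 24|A|C))/(4C), the bulk energy density f_b(q1,q2,q3) = A(q1² + q2² + 3q3²) + C(q1² + q2² + 3q3²)² + 2B q3(q1² + q2² − q3²) satisfies f_b(q1,q2,q3) ≥ (A/3)s₊² − (2B/27)s₊³ + (C/9)s₊⁴ for all (q1,q2,q3) ∈ ℝ³, with equality exactly on the set S = S₁ ∪ S₂ where S₁ = {(q1,q2,q3) : q1² + q2² = s₊²/4, q3 = −s₊/6} and S₂ = {(0,0,s₊/3)}. -/
/-- Key algebraic lemma: nonnegativity and equality cases of the gap polynomial. -/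
lemma bulk_gap_key (B C s r t : ℝ) (hB : 0 < B) (hC : 0 < C) (hs : 0 < s)
    (hd : B < 2 * C * s) (hr : 0 ≤ r) :
    0 ≤ C * (r - (t - s/3)^2 + 4 * (t + s/6) * (t - s/3))^2
        + 2 * B * (t + s/6) * (r - (t - s/3)^2) ∧
    (C * (r - (t - s/3)^2 + 4 * (t + s/6) * (t - s/3))^2
        + 2 * B * (t + s/6) * (r - (t - s/3)^2) = 0 ↔
      (r = s^2/4 ∧ t = -s/6) ∨ (r = 0 ∧ t = s/3)) := by
  set v := t - s/3 with hv
  set w := t + s/6 with hw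
  set g := C * (r - v^2 + 4 * w * v)^2 + 2 * B * w * (r - v^2) with hg
  rcases le_or_gt 0 (8*C*v + B) with hc | hc
  · -- Case B : L, M > 0
    have hL : 0 < 6*C*v^2 + (4*C*s + 2*B)*v + B*s := by
      nlinarith [sq_nonneg (8*C*v + B), mul_nonneg hc hB.le, mul_pos hB (show 0 < 2*C*s - B by linarith), mul_nonneg (mul_nonneg hC.le hs.le) hc, sq_nonneg B, mul_pos hB hs]
    have hM : 0 < 9*C*v^2 + (12*C*s - 2*B)*v + 4*C*s^2 - B*s := by
      nlinarith [sq_nonneg (18*C*v + 12*C*s - 2*B), mul_pos hB (show 0 < 3*C*s - B by nlinarith), hC]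
    have hid : g = C*r^2 + (6*C*v^2 + (4*C*s + 2*B)*v + B*s)*r
        + v^2 * (9*C*v^2 + (12*C*s - 2*B)*v + 4*C*s^2 - B*s) := by
      rw [hg, hv, hw]; ring
    have h1 : 0 ≤ C*r^2 := by positivity
    have h2 : 0 ≤ (6*C*v^2 + (4*C*s + 2*B)*v + B*s)*r := mul_nonneg hL.le hr
    have h3 : 0 ≤ v^2 * (9*C*v^2 + (12*C*s - 2*B)*v + 4*C*s^2 - B*s) :=
      mul_nonneg (sq_nonneg v) hM.le
    constructor
    · rw [hid]; linarith
    constructor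
    · intro h0
      rw [hid] at h0
      have hr0 : r = 0 := by
        rcases hr.lt_or_eq with h | h
        · exfalso; nlinarith
        · exact h.symm
      have hv0 : v = 0 := by
        have : v^2 * (9*C*v^2 + (12*C*s - 2*B)*v + 4*C*s^2 - B*s) = 0 := by
          rw [hr0] at h0; linarith [h0]
        have := (mul_eq_zero.mp this).resolve_right hM.ne'
        exact (pow_eq_zero_iff two_ne_zero).mp this
      right
      exact ⟨hr0, by rw [hv] at hv0; linarith⟩
    · rintro (⟨h1', h2'⟩ | ⟨h1', h2'⟩) <;> rw [hg, hv, hw, h1', h2'] <;> ring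
  · -- Case A : w must vanish at equality
    have hCg : C * g = (C*(r - v^2) + (4*C*v + B)*w)^2 + w^2 * (B * (-(8*C*v + B))) := by
      rw [hg]; ring
    have h2 : 0 ≤ w^2 * (B * (-(8*C*v + B))) :=
      mul_nonneg (sq_nonneg w) (mul_nonneg hB.le (by linarith))
    have h1 : 0 ≤ (C*(r - v^2) + (4*C*v + B)*w)^2 := sq_nonneg _
    have hgnn : 0 ≤ g := nonneg_of_mul_nonneg_right (by rw [hCg]; linarith) hC
    constructor
    · exact hgnn
    constructor
    · intro h0
      have hCg0 : (C*(r - v^2) + (4*C*v + B)*w)^2 + w^2 * (B * (-(8*C*v + B))) = 0 := by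
        rw [← hCg, h0, mul_zero]
      have hw0 : w = 0 := by
        by_contra hne
        have : 0 < w^2 * (B * (-(8*C*v + B))) := by
          apply mul_pos (by positivity) (mul_pos hB (by linarith))
        nlinarith
      have hp0 : r - v^2 = 0 := by
        have hsq : (C*(r - v^2) + (4*C*v + B)*w)^2 = 0 := by nlinarith
        have := (pow_eq_zero_iff two_ne_zero).mp hsq
        rw [hw0] at this
        have : C * (r - v^2) = 0 := by linarith
        exact (mul_eq_zero.mp this).resolve_left hC.ne'
      left
      have ht : t = -s/6 := by rw [hw] at hw0; linarith
      constructor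
      · have : r = v^2 := by linarith
        rw [this, hv, ht]; ring
      · exact ht
    · rintro (⟨h1', h2'⟩ | ⟨h1', h2'⟩) <;> rw [hg, hv, hw, h1', h2'] <;> ring

set_option maxHeartbeats 1000000 in
/-- The reduced bulk energy density is bounded below by its minimum value,
attained exactly on `S₁ ∪ S₂` with
`S₁ = {q1² + q2² = s₊²/4, q3 = −s₊/6}` and `S₂ = {(0,0,s₊/3)}`. -/
theorem bulk_energy_min (A B C sp : ℝ) (hA : A < 0) (hB : 0 < B) (hC : 0 < C)
    (hsp : sp = (B + Real.sqrt (B ^ 2 + 24 * |A| * C)) / (4 * C))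
    (fb : ℝ → ℝ → ℝ → ℝ)
    (hfb : ∀ q1 q2 q3, fb q1 q2 q3 =
      A * (q1 ^ 2 + q2 ^ 2 + 3 * q3 ^ 2) + C * (q1 ^ 2 + q2 ^ 2 + 3 * q3 ^ 2) ^ 2
        + 2 * B * q3 * (q1 ^ 2 + q2 ^ 2 - q3 ^ 2)) :
    (∀ q1 q2 q3 : ℝ,
        fb q1 q2 q3 ≥ A / 3 * sp ^ 2 - 2 * B / 27 * sp ^ 3 + C / 9 * sp ^ 4) ∧
      (∀ q1 q2 q3 : ℝ,
        fb q1 q2 q3 = A / 3 * sp ^ 2 - 2 * B / 27 * sp ^ 3 + C / 9 * sp ^ 4 ↔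
          (q1 ^ 2 + q2 ^ 2 = sp ^ 2 / 4 ∧ q3 = -sp / 6) ∨
            (q1 = 0 ∧ q2 = 0 ∧ q3 = sp / 3)) := by
  have habs : |A| = -A := abs_of_neg hA
  set D := Real.sqrt (B ^ 2 + 24 * |A| * C) with hD
  have hDsq : D^2 = B^2 + 24 * |A| * C := Real.sq_sqrt (by positivity)
  have hDpos : B < D := by
    have h1 : 0 ≤ D := Real.sqrt_nonneg _
    nlinarith [mul_pos (neg_pos.mpr hA) hC]
  have hspos : 0 < sp := by
    rw [hsp]
    apply div_pos (by linarith) (by linarith)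
  have h16 : 16*C*(2*C*sp^2 - B*sp + 3*A) = 0 := by
    have hsp4 : 4*C*sp = B + D := by
      rw [hsp]; field_simp
    have hDsq' : D^2 = B^2 - 24*A*C := by rw [hDsq, habs]; ring
    linear_combination (2*(4*C*sp + B + D) - 4*B) * hsp4 + 2 * hDsq'
  have hident : 2*C*sp^2 - B*sp + 3*A = 0 := by
    rcases mul_eq_zero.mp h16 with h | h
    · exact absurd h (by positivity)
    · exact h
  have hBs : B < 2*C*sp := by
    by_contra h
    push_neg at h
    nlinarith [mul_nonneg hspos.le (sub_nonneg.mpr h)]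
  have h3A : 3*A = B*sp - 2*C*sp^2 := by linarith
  have hgap : ∀ q1 q2 q3 : ℝ,
      fb q1 q2 q3 - (A / 3 * sp ^ 2 - 2 * B / 27 * sp ^ 3 + C / 9 * sp ^ 4) =
        C * ((q1^2+q2^2) - (q3 - sp/3)^2 + 4 * (q3 + sp/6) * (q3 - sp/3))^2
          + 2 * B * (q3 + sp/6) * ((q1^2+q2^2) - (q3 - sp/3)^2) := by
    intro q1 q2 q3
    rw [hfb]
    linear_combination ((q1^2+q2^2+3*q3^2 - sp^2/3)/3) * h3A
  constructor
  · intro q1 q2 q3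
    have hkey := (bulk_gap_key B C sp (q1^2+q2^2) q3 hB hC hspos hBs (by positivity)).1
    have := hgap q1 q2 q3
    linarith
  · intro q1 q2 q3
    have hkey := (bulk_gap_key B C sp (q1^2+q2^2) q3 hB hC hspos hBs (by positivity)).2
    have hg := hgap q1 q2 q3
    constructor
    · intro h0
      have : C * ((q1^2+q2^2) - (q3 - sp/3)^2 + 4 * (q3 + sp/6) * (q3 - sp/3))^2
          + 2 * B * (q3 + sp/6) * ((q1^2+q2^2) - (q3 - sp/3)^2) = 0 := by linarith
      rcases hkey.mp this with ⟨h1, h2⟩ | ⟨h1, h2⟩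
      · exact Or.inl ⟨h1, h2⟩
      · right
        refine ⟨?_, ?_, h2⟩
        · nlinarith [sq_nonneg q1, sq_nonneg q2]
        · nlinarith [sq_nonneg q1, sq_nonneg q2]
    · rintro (⟨h1, h2⟩ | ⟨h1, h2, h3⟩)
      · have : C * ((q1^2+q2^2) - (q3 - sp/3)^2 + 4 * (q3 + sp/6) * (q3 - sp/3))^2
            + 2 * B * (q3 + sp/6) * ((q1^2+q2^2) - (q3 - sp/3)^2) = 0 :=
          hkey.mpr (Or.inl ⟨h1, h2⟩)
        linarith
      · have : C * ((q1^2+q2^2) - (q3 - sp/3)^2 + 4 * (q3 + sp/6) * (q3 - sp/3))^2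
            + 2 * B * (q3 + sp/6) * ((q1^2+q2^2) - (q3 - sp/3)^2) = 0 := by
          apply hkey.mpr (Or.inr ⟨by rw [h1, h2]; ring, h3⟩)
        linarith
end

section
/- The 3×3 matrix system A q_xx + 2B q_xy + C q_yy = 0 with A = [[1/2,0,−1/2],[0,1/2,0],[−1/6,0,1/6]], B = [[0,0,0],[0,0,−1/2],[0,−1/6,0]], C = [[1/2,0,1/2],[0,1/2,0],[1/6,0,1/6]] is not elliptic in the sense of Petrovsky: the determinant det(A α² + 2B αβ + C β²) is identically zero for all real α, β. -/
open Matrix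

/-- The leading-order Euler–Lagrange system in the `L2 → ∞` limit is not elliptic
in the sense of Petrovsky: the determinant of the symbol matrix vanishes identically. -/
theorem not_elliptic_Petrovsky
    (A B C : Matrix (Fin 3) (Fin 3) ℝ)
    (hA : A = !![1/2, 0, -1/2; 0, 1/2, 0; -1/6, 0, 1/6])
    (hB : B = !![0, 0, 0; 0, 0, -1/2; 0, -1/6, 0])
    (hC : C = !![1/2, 0, 1/2; 0, 1/2, 0; 1/6, 0, 1/6]) :
    ∀ α β : ℝ, (α ^ 2 • A + (2 * α * β) • B + β ^ 2 • C).det = 0 := by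
  intro α β
  subst hA hB hC
  simp [Matrix.det_fin_three, Matrix.smul_apply, Matrix.add_apply]
  ring
end

section
/- The value of the double series h₀(0,0) = (16 s₊)/(3π²) Σ_{m,n odd ≥ 1} (m n)/((m² + n²)²) · (−1)^{(m+n−2)/2} is strictly positive; in fact it is at least s₊/6 − s₊/9 = s₊/18 > 0, for any s₊ > 0. -/
/-!
Sum over `j` first. For fixed `m = 2i+1` the terms `n ↦ mn/(m²+n²)²` increase up to
`n ≈ m/√3` and decrease afterwards, so the alternating row sum is bounded in absolute value by
the largest term, which is at most `1/(3m²)`. The row `m = 1` is a Leibniz series whose sum is at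
least `1/4 - 3/100`. Since `∑ 1/m² = π²/8` over odd `m`, the double sum is therefore at least
`11/50 + 1/3 - π²/24`, and `16/(3π²) · (83/150 - π²/24) > 1/18`.
-/

open Real Set

section Alternating

variable {c : ℕ → ℝ}

theorem Antitone.tsum_alternating_mem_Icc (hc : Antitone c) (hsum : Summable c) (k : ℕ) :
    ∑' i, (-1) ^ i * c i ∈ Icc (∑ i ∈ Finset.range (2 * k), (-1) ^ i * c i)
      (∑ i ∈ Finset.range (2 * k + 1), (-1) ^ i * c i) :=
  ⟨hc.alternating_series_le_tendsto hsum.tendsto_alternating_series_tsum k,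
    hc.tendsto_le_alternating_series hsum.tendsto_alternating_series_tsum k⟩

theorem MonotoneOn.neg_one_pow_mul_sum_alternating_mem_Icc {J : ℕ} (hc : MonotoneOn c (Iio J))
    (h0 : 0 ≤ c 0) {j : ℕ} (hj : j < J) :
    (-1) ^ j * ∑ i ∈ Finset.range (j + 1), (-1) ^ i * c i ∈ Icc 0 (c j) := by
  induction j with
  | zero => simpa using h0
  | succ j ih =>
    obtain ⟨hlo, hhi⟩ := ih (by omega)
    have hstep : c j ≤ c (j + 1) := hc (mem_Iio.2 (by omega)) (mem_Iio.2 hj) (by omega)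
    have hsq : ((-1 : ℝ) ^ j) ^ 2 = 1 := by rw [← pow_mul, pow_mul']; simp
    have hrec : (-1 : ℝ) ^ (j + 1) * ∑ i ∈ Finset.range (j + 1 + 1), (-1) ^ i * c i
        = c (j + 1) - (-1) ^ j * ∑ i ∈ Finset.range (j + 1), (-1) ^ i * c i := by
      rw [Finset.sum_range_succ, pow_succ]
      linear_combination c (j + 1) * hsq
    rw [hrec]
    constructor <;> linarith

theorem abs_tsum_alternating_le_of_unimodal (hsum : Summable c) (h0 : 0 ≤ c 0)
    {J : ℕ} (hmono : MonotoneOn c (Iio J)) (hanti : AntitoneOn c (Ici J)) {M : ℝ}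
    (hM : ∀ j, c j ≤ M) :
    |∑' j, (-1) ^ j * c j| ≤ M := by
  have htail : Antitone fun k ↦ c (k + J) := fun a b hab ↦
    hanti (mem_Ici.2 (by omega)) (mem_Ici.2 (by omega)) (by omega)
  obtain ⟨hT0, hT1⟩ := htail.tsum_alternating_mem_Icc ((summable_nat_add_iff J).2 hsum) 0
  simp only [mul_zero, zero_add, Finset.range_zero, Finset.sum_empty, Finset.sum_range_one,
    pow_zero, one_mul] at hT0 hT1
  have hsplit : ∑' j, (-1) ^ j * c j = ∑ j ∈ Finset.range J, (-1) ^ j * c j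
      + (-1) ^ J * ∑' k, (-1) ^ k * c (k + J) := by
    rw [← hsum.alternating.sum_add_tsum_nat_add J, ← tsum_mul_left]
    congr 1
    exact tsum_congr fun k ↦ by ring
  -- The head and the tail each lie between `0` and a term of `c`, and enter with opposite signs.
  cases J with
  | zero =>
    simp only [Finset.range_zero, Finset.sum_empty, pow_zero, one_mul, zero_add] at hsplit
    rw [hsplit, abs_of_nonneg hT0]
    exact hT1.trans (hM 0)
  | succ j =>
    obtain ⟨hP0, hP1⟩ := hmono.neg_one_pow_mul_sum_alternating_mem_Icc h0 j.lt_succ_self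
    have hsq : ((-1 : ℝ) ^ j) ^ 2 = 1 := by rw [← pow_mul, pow_mul']; simp
    have hflip : (-1) ^ j * ∑' j, (-1) ^ j * c j = (-1) ^ j * ∑ i ∈ Finset.range (j + 1),
        (-1) ^ i * c i - ∑' k, (-1) ^ k * c (k + (j + 1)) := by
      rw [hsplit, pow_succ]
      linear_combination (-∑' k, (-1) ^ k * c (k + (j + 1))) * hsq
    calc |∑' j, (-1) ^ j * c j| = |(-1) ^ j * ∑' j, (-1) ^ j * c j| := by
          rw [abs_mul, abs_neg_one_pow, one_mul]
      _ ≤ M := by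
          rw [hflip]
          exact abs_sub_le_of_nonneg_of_le hP0 (hP1.trans (hM j)) hT0 (hT1.trans (hM _))

end Alternating

noncomputable def h0Summand (m n : ℝ) : ℝ := m * n / (m ^ 2 + n ^ 2) ^ 2

section Summand

variable {m : ℝ}

theorem h0Summand_nonneg (hm : 0 ≤ m) {n : ℝ} (hn : 0 ≤ n) : 0 ≤ h0Summand m n := by
  unfold h0Summand; positivity

theorem h0Summand_le_one_div_three_mul_sq (hm : 0 < m) (n : ℝ) :
    h0Summand m n ≤ 1 / (3 * m ^ 2) := by
  unfold h0Summand
  rw [div_le_div_iff₀ (by positivity) (by positivity)]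
  nlinarith [sq_nonneg (4 * m ^ 2 - 6 * m * n - n ^ 2),
    mul_nonneg (sq_nonneg n) (sq_nonneg (2 * m - 3 * n)), sq_nonneg (n ^ 2)]

theorem h0Summand_le_one_div_two_mul_sq (m : ℝ) {n : ℝ} (hn : 0 < n) :
    h0Summand m n ≤ 1 / (2 * n ^ 2) := by
  unfold h0Summand
  rw [div_le_div_iff₀ (by positivity) (by positivity)]
  nlinarith [sq_nonneg (m * n - n ^ 2), sq_nonneg (m ^ 2), sq_nonneg (m * n)]

theorem mul_add_sq_sq_sub_mul_add_sq_sq (A a b : ℝ) :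
    a * (A + b ^ 2) ^ 2 - b * (A + a ^ 2) ^ 2
      = (b - a) * (-A ^ 2 + 2 * A * a * b + a * b * (a ^ 2 + a * b + b ^ 2)) := by
  ring

theorem antitoneOn_h0Summand (hm : 0 < m) :
    AntitoneOn (h0Summand m) {n | 0 ≤ n ∧ m ^ 2 ≤ 3 * n ^ 2} := by
  rintro a ⟨ha, hma⟩ b ⟨-, -⟩ hab
  have hq : 0 ≤ -(m ^ 2) ^ 2 + 2 * m ^ 2 * a * b + a * b * (a ^ 2 + a * b + b ^ 2) := by
    have hb := ha.trans hab
    nlinarith [mul_nonneg (sub_nonneg.2 hma) (add_nonneg (sq_nonneg m) (sq_nonneg a)),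
      mul_nonneg (mul_nonneg (sq_nonneg m) ha) (sub_nonneg.2 hab),
      mul_nonneg (mul_nonneg ha (sub_nonneg.2 hab))
        (by positivity : 0 ≤ b ^ 2 + 2 * a * b + 3 * a ^ 2)]
  unfold h0Summand
  rw [div_le_div_iff₀ (by positivity) (by positivity)]
  nlinarith [mul_nonneg hm.le (mul_nonneg (sub_nonneg.2 hab) hq),
    mul_add_sq_sq_sub_mul_add_sq_sq (m ^ 2) a b]

theorem monotoneOn_h0Summand (hm : 0 < m) :
    MonotoneOn (h0Summand m) {n | 0 ≤ n ∧ 3 * n ^ 2 ≤ m ^ 2} := by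
  rintro a ⟨ha, -⟩ b ⟨hb, hbm⟩ hab
  have hq : -(m ^ 2) ^ 2 + 2 * m ^ 2 * a * b + a * b * (a ^ 2 + a * b + b ^ 2) ≤ 0 := by
    nlinarith [mul_nonneg (sub_nonneg.2 hbm) (add_nonneg (sq_nonneg m) (sq_nonneg b)),
      mul_nonneg (mul_nonneg (sq_nonneg m) hb) (sub_nonneg.2 hab),
      mul_nonneg (mul_nonneg hb (sub_nonneg.2 hab))
        (by positivity : 0 ≤ 3 * b ^ 2 + 2 * a * b + a ^ 2)]
  unfold h0Summand
  rw [div_le_div_iff₀ (by positivity) (by positivity)]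
  nlinarith [mul_nonneg hm.le (mul_nonneg (sub_nonneg.2 hab) (neg_nonneg.2 hq)),
    mul_add_sq_sq_sub_mul_add_sq_sq (m ^ 2) a b]

end Summand

theorem hasSum_one_div_odd_sq :
    HasSum (fun i : ℕ ↦ 1 / (2 * (i : ℝ) + 1) ^ 2) (π ^ 2 / 8) := by
  have heven : HasSum (fun i : ℕ ↦ 1 / ((2 * i : ℕ) : ℝ) ^ 2) (π ^ 2 / 24) := by
    have h := hasSum_zeta_two.mul_left (1 / 4)
    rw [show 1 / 4 * (π ^ 2 / 6) = π ^ 2 / 24 by ring] at h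
    exact h.congr_fun fun i ↦ by push_cast; ring
  have hodd : Summable (fun i : ℕ ↦ 1 / ((2 * i + 1 : ℕ) : ℝ) ^ 2) :=
    hasSum_zeta_two.summable.comp_injective (i := fun i : ℕ ↦ 2 * i + 1)
      fun a b h ↦ by simp only at h; omega
  have hval : π ^ 2 / 6 = π ^ 2 / 24 + ∑' i : ℕ, 1 / ((2 * i + 1 : ℕ) : ℝ) ^ 2 :=
    hasSum_zeta_two.unique
      (HasSum.even_add_odd (f := fun n : ℕ ↦ 1 / (n : ℝ) ^ 2) heven hodd.hasSum)
  have h := hodd.hasSum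
  push_cast at hval h
  convert h using 1
  linarith

noncomputable def oddRowSum (i : ℕ) : ℝ :=
  ∑' j : ℕ, (-1) ^ j * h0Summand (2 * i + 1) (2 * j + 1)

theorem summable_h0Summand_odd (i : ℕ) :
    Summable fun j : ℕ ↦ h0Summand (2 * i + 1) (2 * j + 1) := by
  refine Summable.of_nonneg_of_le (fun j ↦ h0Summand_nonneg (by positivity) (by positivity))
    (fun j ↦ h0Summand_le_one_div_two_mul_sq _ (by positivity)) ?_
  exact (hasSum_one_div_odd_sq.summable.div_const 2).congr fun j ↦ by rw [div_div, mul_comm]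

theorem exists_monotoneOn_antitoneOn_h0Summand_odd (i : ℕ) :
    ∃ J : ℕ, MonotoneOn (fun j : ℕ ↦ h0Summand (2 * i + 1) (2 * j + 1)) (Iio J) ∧
      AntitoneOn (fun j : ℕ ↦ h0Summand (2 * i + 1) (2 * j + 1)) (Ici J) := by
  classical
  have hm : (0 : ℝ) < 2 * i + 1 := by positivity
  have hP : ∃ j : ℕ, (2 * (i : ℝ) + 1) ^ 2 ≤ 3 * (2 * j + 1) ^ 2 := ⟨i, by nlinarith⟩
  refine ⟨Nat.find hP, fun a ha b hb hab ↦ ?_, fun a ha b hb hab ↦ ?_⟩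
  · refine monotoneOn_h0Summand hm ⟨by positivity, (not_le.1 (Nat.find_min hP ha)).le⟩
      ⟨by positivity, (not_le.1 (Nat.find_min hP hb)).le⟩ (by simpa using hab)
  · have hJ := Nat.find_spec hP
    refine antitoneOn_h0Summand hm ⟨by positivity, hJ.trans (by gcongr; exact mem_Ici.1 ha)⟩
      ⟨by positivity, hJ.trans (by gcongr; exact mem_Ici.1 hb)⟩ (by simpa using hab)

theorem abs_oddRowSum_le (i : ℕ) : |oddRowSum i| ≤ 1 / (3 * (2 * i + 1) ^ 2) := by
  obtain ⟨J, hmono, hanti⟩ := exists_monotoneOn_antitoneOn_h0Summand_odd i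
  exact abs_tsum_alternating_le_of_unimodal (summable_h0Summand_odd i)
    (h0Summand_nonneg (by positivity) (by positivity)) hmono hanti
    fun j ↦ h0Summand_le_one_div_three_mul_sq (by positivity) _

theorem oddRowSum_zero_ge : 11 / 50 ≤ oddRowSum 0 := by
  have hanti : Antitone fun j : ℕ ↦ h0Summand 1 (2 * j + 1) := fun a b hab ↦
    antitoneOn_h0Summand one_pos ⟨by positivity, by nlinarith [a.cast_nonneg (α := ℝ)]⟩
      ⟨by positivity, by nlinarith [b.cast_nonneg (α := ℝ)]⟩
      (by simpa using hab)
  have h := (hanti.tsum_alternating_mem_Icc (by simpa using summable_h0Summand_odd 0) 1).1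
  norm_num [Finset.sum_range_succ, h0Summand] at h
  simpa [oddRowSum, h0Summand] using h

theorem add_sub_tsum_le_tsum_of_abs_le {a b : ℕ → ℝ} (hb : Summable b)
    (hab : ∀ i, |a i| ≤ b i) : a 0 + b 0 - ∑' i, b i ≤ ∑' i, a i := by
  have ha : Summable a := Summable.of_norm_bounded hb hab
  have htail : -∑' i, b (i + 1) ≤ ∑' i, a (i + 1) := by
    rw [← tsum_neg]
    exact Summable.tsum_le_tsum (fun i ↦ neg_le_of_abs_le (hab _))
      ((summable_nat_add_iff 1).2 hb).neg ((summable_nat_add_iff 1).2 ha)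
  rw [ha.tsum_eq_zero_add, hb.tsum_eq_zero_add]
  linarith

/-- Odd `m, n` are written `2i+1, 2j+1`, so that `(−1)^{(m+n−2)/2} = (−1)^{i+j}`. -/
theorem h0_center_positive (sp : ℝ) (hsp : 0 < sp) :
    (16 * sp) / (3 * π ^ 2) *
        ∑' i : ℕ, ∑' j : ℕ,
          (2 * (i : ℝ) + 1) * (2 * (j : ℝ) + 1)
              / ((2 * (i : ℝ) + 1) ^ 2 + (2 * (j : ℝ) + 1) ^ 2) ^ 2
            * (-1 : ℝ) ^ (i + j)
      ≥ sp / 6 - sp / 9 ∧ sp / 6 - sp / 9 = sp / 18 ∧ 0 < sp / 18 := by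
  have hrow : ∀ i : ℕ, ∑' j : ℕ,
      (2 * (i : ℝ) + 1) * (2 * (j : ℝ) + 1)
          / ((2 * (i : ℝ) + 1) ^ 2 + (2 * (j : ℝ) + 1) ^ 2) ^ 2 * (-1 : ℝ) ^ (i + j)
      = (-1) ^ i * oddRowSum i := fun i ↦ by
    rw [oddRowSum, ← tsum_mul_left]
    exact tsum_congr fun j ↦ by rw [pow_add, h0Summand]; ring
  have hcap : HasSum (fun i : ℕ ↦ 1 / (3 * (2 * (i : ℝ) + 1) ^ 2)) (π ^ 2 / 24) := by
    have h := hasSum_one_div_odd_sq.div_const 3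
    rw [show π ^ 2 / 8 / 3 = π ^ 2 / 24 by ring] at h
    exact h.congr_fun fun i ↦ by rw [div_div, mul_comm]
  have hS : 11 / 50 + 1 / 3 - π ^ 2 / 24 ≤ ∑' i : ℕ, (-1) ^ i * oddRowSum i := by
    have h := add_sub_tsum_le_tsum_of_abs_le (a := fun i ↦ (-1) ^ i * oddRowSum i)
      hcap.summable fun i ↦ by
      rw [abs_mul, abs_neg_one_pow, one_mul]; exact abs_oddRowSum_le i
    rw [hcap.tsum_eq] at h
    norm_num at h
    linarith [oddRowSum_zero_ge]
  have hpi : π ^ 2 < 10 := by nlinarith [pi_lt_d2, pi_pos]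
  rw [tsum_congr hrow]
  refine ⟨?_, by ring, by positivity⟩
  rw [ge_iff_le, div_mul_eq_mul_div, le_div_iff₀ (by positivity)]
  nlinarith [mul_le_mul_of_nonneg_left hS (by positivity : (0 : ℝ) ≤ 16 * sp)]
end

section
/- Let Q_u = s₊(n⊗n − I/3) with n = (cos θ, sin θ, 0). Then the in-plane components are q1 = (s₊/2)cos(2θ), q2 = (s₊/2)sin(2θ), q3 = −s₊/6, and for θ : Ω → ℝ differentiable, the identity |∇q1|² + |∇q2|² + 3|∇q3|² = s₊²|∇θ|² holds pointwise; moreover the full anisotropic elastic density satisfies f_el(q1,q2,q3) = s₊²(1 + L2/2)|∇θ|². -/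
/-!
Writing `q1 + i q2 = (s₊/2) e^{2iθ}`, the chain rule gives `∂q1 = -s₊ sin 2θ ∂θ` and
`∂q2 = s₊ cos 2θ ∂θ`, so `|∇q1|² + |∇q2|² = s₊² |∇θ|²`, while `q3` is constant. In `f_el` every
cross term with `q3` then drops out, and the Jacobian term `q2_y q1_x − q1_y q2_x` vanishes because
`∇q1` and `∇q2` are both multiples of `∇θ`.
-/

open Matrix

noncomputable def pdx (f : ℝ × ℝ → ℝ) (p : ℝ × ℝ) : ℝ :=
  deriv (fun x => f (x, p.2)) p.1

noncomputable def pdy (f : ℝ × ℝ → ℝ) (p : ℝ × ℝ) : ℝ :=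
  deriv (fun y => f (p.1, y)) p.2

section PartialDerivatives

variable {f : ℝ × ℝ → ℝ} {h : ℝ → ℝ} {h' : ℝ} {p : ℝ × ℝ}

theorem pdx_comp (hh : HasDerivAt h h' (f p))
    (hf : DifferentiableAt ℝ (fun x => f (x, p.2)) p.1) :
    pdx (fun q => h (f q)) p = h' * pdx f p :=
  (hh.comp p.1 hf.hasDerivAt).deriv

theorem pdy_comp (hh : HasDerivAt h h' (f p))
    (hf : DifferentiableAt ℝ (fun y => f (p.1, y)) p.2) :
    pdy (fun q => h (f q)) p = h' * pdy f p :=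
  (hh.comp p.2 hf.hasDerivAt).deriv

theorem pdx_const (c : ℝ) (p : ℝ × ℝ) : pdx (fun _ => c) p = 0 :=
  deriv_const _ c

theorem pdy_const (c : ℝ) (p : ℝ × ℝ) : pdy (fun _ => c) p = 0 :=
  deriv_const _ c

end PartialDerivatives

theorem hasDerivAt_half_mul_cos_two_mul (s t : ℝ) :
    HasDerivAt (fun t => s / 2 * Real.cos (2 * t)) (-(s * Real.sin (2 * t))) t :=
  ((((hasDerivAt_id' t).const_mul 2).cos).const_mul (s / 2)).congr_deriv (by ring)

theorem hasDerivAt_half_mul_sin_two_mul (s t : ℝ) :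
    HasDerivAt (fun t => s / 2 * Real.sin (2 * t)) (s * Real.cos (2 * t)) t :=
  ((((hasDerivAt_id' t).const_mul 2).sin).const_mul (s / 2)).congr_deriv (by ring)

theorem smul_vecMulVec_sub_third_eq {c s : ℝ} (sp : ℝ) (hcs : c ^ 2 + s ^ 2 = 1) :
    sp • (vecMulVec ![c, s, 0] ![c, s, 0] - (1 / 3 : ℝ) • (1 : Matrix (Fin 3) (Fin 3) ℝ))
      = (sp / 2 * (c ^ 2 - s ^ 2)) • (single 0 0 (1 : ℝ) - single 1 1 (1 : ℝ))
        + (sp / 2 * (2 * s * c)) • (single 0 1 (1 : ℝ) + single 1 0 (1 : ℝ))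
        + (-sp / 6) • ((2 : ℝ) • single 2 2 (1 : ℝ) - single 0 0 (1 : ℝ) - single 1 1 (1 : ℝ)) := by
  ext i j
  fin_cases i <;> fin_cases j <;> simp [vecMulVec, one_apply] <;>
    first | ring1 | linear_combination (sp / 2) * hcs

theorem uniaxial_elastic_energy_general (sp L2 : ℝ) (θ : ℝ × ℝ → ℝ)
    (hθx : ∀ p : ℝ × ℝ, DifferentiableAt ℝ (fun x => θ (x, p.2)) p.1)
    (hθy : ∀ p : ℝ × ℝ, DifferentiableAt ℝ (fun y => θ (p.1, y)) p.2)
    (q1 q2 q3 : ℝ × ℝ → ℝ)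
    (hq1 : ∀ p, q1 p = sp / 2 * Real.cos (2 * θ p))
    (hq2 : ∀ p, q2 p = sp / 2 * Real.sin (2 * θ p))
    (hq3 : ∀ p, q3 p = -sp / 6) :
    (∀ p : ℝ × ℝ,
        sp • (vecMulVec ![Real.cos (θ p), Real.sin (θ p), 0]
              ![Real.cos (θ p), Real.sin (θ p), 0]
            - (1 / 3 : ℝ) • (1 : Matrix (Fin 3) (Fin 3) ℝ))
          = q1 p • (Matrix.single 0 0 (1 : ℝ) - Matrix.single 1 1 (1 : ℝ))
            + q2 p • (Matrix.single 0 1 (1 : ℝ) + Matrix.single 1 0 (1 : ℝ))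
            + q3 p • ((2 : ℝ) • Matrix.single 2 2 (1 : ℝ)
                - Matrix.single 0 0 (1 : ℝ) - Matrix.single 1 1 (1 : ℝ))) ∧
      (∀ p : ℝ × ℝ,
        pdx q1 p ^ 2 + pdy q1 p ^ 2 + pdx q2 p ^ 2 + pdy q2 p ^ 2
            + 3 * (pdx q3 p ^ 2 + pdy q3 p ^ 2)
          = sp ^ 2 * (pdx θ p ^ 2 + pdy θ p ^ 2)) ∧
      (∀ p : ℝ × ℝ,
        (1 + L2 / 2) * (pdx q1 p ^ 2 + pdy q1 p ^ 2)
            + (1 + L2 / 2) * (pdx q2 p ^ 2 + pdy q2 p ^ 2)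
            + (3 + L2 / 2) * (pdx q3 p ^ 2 + pdy q3 p ^ 2)
            + L2 * (pdy q1 p * pdy q3 p - pdx q1 p * pdx q3 p
                - pdy q2 p * pdx q3 p - pdx q2 p * pdy q3 p)
            + L2 * (pdy q2 p * pdx q1 p - pdy q1 p * pdx q2 p)
          = sp ^ 2 * (1 + L2 / 2) * (pdx θ p ^ 2 + pdy θ p ^ 2)) := by
  refine ⟨fun p => ?_, ?_⟩
  · rw [hq1, hq2, hq3, Real.cos_two_mul', Real.sin_two_mul]
    exact smul_vecMulVec_sub_third_eq sp (Real.cos_sq_add_sin_sq _)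
  obtain rfl : q1 = fun p => sp / 2 * Real.cos (2 * θ p) := funext hq1
  obtain rfl : q2 = fun p => sp / 2 * Real.sin (2 * θ p) := funext hq2
  obtain rfl : q3 = fun _ => -sp / 6 := funext hq3
  refine ⟨fun p => ?_, fun p => ?_⟩
  all_goals
    rw [pdx_comp (hasDerivAt_half_mul_cos_two_mul sp (θ p)) (hθx p),
      pdy_comp (hasDerivAt_half_mul_cos_two_mul sp (θ p)) (hθy p),
      pdx_comp (hasDerivAt_half_mul_sin_two_mul sp (θ p)) (hθx p),
      pdy_comp (hasDerivAt_half_mul_sin_two_mul sp (θ p)) (hθy p),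
      pdx_const, pdy_const]
  · linear_combination sp ^ 2 * (pdx θ p ^ 2 + pdy θ p ^ 2) * Real.sin_sq_add_cos_sq (2 * θ p)
  · linear_combination
      (1 + L2 / 2) * sp ^ 2 * (pdx θ p ^ 2 + pdy θ p ^ 2) * Real.sin_sq_add_cos_sq (2 * θ p)

/-- For the uniaxial tensor `Q_u = s₊(n⊗n − I/3)` with `n = (cos θ, sin θ, 0)`,
the reduced components are `q1 = (s₊/2)cos 2θ`, `q2 = (s₊/2)sin 2θ`, `q3 = −s₊/6`;
moreover `|∇q1|² + |∇q2|² + 3|∇q3|² = s₊²|∇θ|²` and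
`f_el(q1,q2,q3) = s₊²(1 + L2/2)|∇θ|²` pointwise. -/
theorem uniaxial_elastic_energy (sp L2 : ℝ) (hL2 : -1 < L2) (θ : ℝ × ℝ → ℝ)
    (hθx : ∀ p : ℝ × ℝ, DifferentiableAt ℝ (fun x => θ (x, p.2)) p.1)
    (hθy : ∀ p : ℝ × ℝ, DifferentiableAt ℝ (fun y => θ (p.1, y)) p.2)
    (q1 q2 q3 : ℝ × ℝ → ℝ)
    (hq1 : ∀ p, q1 p = sp / 2 * Real.cos (2 * θ p))
    (hq2 : ∀ p, q2 p = sp / 2 * Real.sin (2 * θ p))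
    (hq3 : ∀ p, q3 p = -sp / 6) :
    (∀ p : ℝ × ℝ,
        sp • (vecMulVec ![Real.cos (θ p), Real.sin (θ p), 0]
              ![Real.cos (θ p), Real.sin (θ p), 0]
            - (1 / 3 : ℝ) • (1 : Matrix (Fin 3) (Fin 3) ℝ))
          = q1 p • (Matrix.single 0 0 (1 : ℝ) - Matrix.single 1 1 (1 : ℝ))
            + q2 p • (Matrix.single 0 1 (1 : ℝ) + Matrix.single 1 0 (1 : ℝ))
            + q3 p • ((2 : ℝ) • Matrix.single 2 2 (1 : ℝ)
                - Matrix.single 0 0 (1 : ℝ) - Matrix.single 1 1 (1 : ℝ))) ∧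
      (∀ p : ℝ × ℝ,
        pdx q1 p ^ 2 + pdy q1 p ^ 2 + pdx q2 p ^ 2 + pdy q2 p ^ 2
            + 3 * (pdx q3 p ^ 2 + pdy q3 p ^ 2)
          = sp ^ 2 * (pdx θ p ^ 2 + pdy θ p ^ 2)) ∧
      (∀ p : ℝ × ℝ,
        (1 + L2 / 2) * (pdx q1 p ^ 2 + pdy q1 p ^ 2)
            + (1 + L2 / 2) * (pdx q2 p ^ 2 + pdy q2 p ^ 2)
            + (3 + L2 / 2) * (pdx q3 p ^ 2 + pdy q3 p ^ 2)
            + L2 * (pdy q1 p * pdy q3 p - pdx q1 p * pdx q3 p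
                - pdy q2 p * pdx q3 p - pdx q2 p * pdy q3 p)
            + L2 * (pdy q2 p * pdx q1 p - pdy q1 p * pdx q2 p)
          = sp ^ 2 * (1 + L2 / 2) * (pdx θ p ^ 2 + pdy θ p ^ 2)) :=
  uniaxial_elastic_energy_general sp L2 θ hθx hθy q1 q2 q3 hq1 hq2 hq3
end
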